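/- arXiv:2003.13420 — 3 statements merged into one kernel-verified Lean document; each statement's English description precedes it below -/
import Mathlib

section
/- If real numbers t ≥ 1, n ≥ 2 with t ≤ n, and a nonnegative integer z satisfy t·2^(z/t) ≤ n·e^(z/(2t)), then z ≤ C·t·log(n/t) for some absolute constant C (e.g., C = 10 works, using natural logarithm). -/
/-- MWU analysis: if `t·2^(z/t) ≤ n·e^(z/(2t))` with `1 ≤ t ≤ n`, `2 ≤ n`, then
`z ≤ C·t·log(n/t)` for an absolute constant `C`. -/
theorem stmt0 :
    ∃ C : ℝ, 0 < C ∧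
      ∀ (t n : ℝ) (z : ℕ), 1 ≤ t → 2 ≤ n → t ≤ n →
        t * (2 : ℝ) ^ ((z : ℝ) / t) ≤ n * Real.exp ((z : ℝ) / (2 * t)) →
        (z : ℝ) ≤ C * t * Real.log (n / t) := by
  refine ⟨10, by norm_num, ?_⟩
  intro t n z ht hn htn h
  have ht0 : (0 : ℝ) < t := by linarith
  have hn0 : (0 : ℝ) < n := by linarith
  have hpow : (0 : ℝ) < (2 : ℝ) ^ ((z : ℝ) / t) := Real.rpow_pos_of_pos (by norm_num) _
  have hlhs : (0 : ℝ) < t * (2 : ℝ) ^ ((z : ℝ) / t) := mul_pos ht0 hpow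
  have hlog := Real.log_le_log hlhs h
  rw [Real.log_mul (ne_of_gt ht0) (ne_of_gt hpow),
      Real.log_mul (ne_of_gt hn0) (Real.exp_ne_zero _),
      Real.log_rpow (by norm_num), Real.log_exp] at hlog
  have h2 : (0.6931471803 : ℝ) < Real.log 2 := Real.log_two_gt_d9
  have hlogdiv : Real.log (n / t) = Real.log n - Real.log t :=
    Real.log_div (ne_of_gt hn0) (ne_of_gt ht0)
  have hz : (0 : ℝ) ≤ (z : ℝ) := Nat.cast_nonneg z
  have key : (z : ℝ) / t * (Real.log 2 - 1 / 2) ≤ Real.log (n / t) := by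
    have : (z : ℝ) / (2 * t) = (z : ℝ) / t * (1 / 2) := by
      rw [mul_comm, ← div_div]; ring
    rw [hlogdiv]
    nlinarith [hlog]
  have hzt : (0 : ℝ) ≤ (z : ℝ) / t := div_nonneg hz ht0.le
  have key2 : (z : ℝ) / t * (1 / 10) ≤ Real.log (n / t) := by
    nlinarith
  calc (z : ℝ) = ((z : ℝ) / t * (1 / 10)) * (10 * t) := by field_simp
    _ ≤ Real.log (n / t) * (10 * t) := by
        apply mul_le_mul_of_nonneg_right key2; positivity
    _ = 10 * t * Real.log (n / t) := by ring
end

section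
/- Suppose real numbers t ≥ 1, n ≥ 2, and a nonnegative integer z satisfy t·2^(z/t) ≤ n·e^(z/(2t)) · (1.1)^(z/t). Then z ≤ C·t·log(n/t) for an absolute constant C. -/
/-- Modified MWU analysis with readjustment: if
`t·2^(z/t) ≤ n·e^(z/(2t))·1.1^(z/t)` with `t ≥ 1`, `n ≥ 2`, then
`z ≤ C·t·log(n/t)` for an absolute constant `C`. -/
theorem stmt4 :
    ∃ C : ℝ, 0 < C ∧
      ∀ (t n : ℝ) (z : ℕ), 1 ≤ t → 2 ≤ n →
        t * (2 : ℝ) ^ ((z : ℝ) / t) ≤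
          n * Real.exp ((z : ℝ) / (2 * t)) * (1.1 : ℝ) ^ ((z : ℝ) / t) →
        (z : ℝ) ≤ C * t * Real.log (n / t) := by
  refine ⟨20, by norm_num, ?_⟩
  intro t n z ht hn h
  have ht0 : (0:ℝ) < t := by linarith
  have hn0 : (0:ℝ) < n := by linarith
  have hz0 : (0:ℝ) ≤ (z:ℝ) := Nat.cast_nonneg z
  have hlog2 : (0.6931471803:ℝ) < Real.log 2 := Real.log_two_gt_d9
  have hlog11 : Real.log 1.1 ≤ 0.1 := by
    have := Real.log_le_sub_one_of_pos (by norm_num : (0:ℝ) < 1.1)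
    linarith
  have hL : 0 < t * (2:ℝ) ^ ((z:ℝ)/t) := by positivity
  have h' := Real.log_le_log hL h
  rw [Real.log_mul (ne_of_gt ht0) (by positivity),
      Real.log_mul (by positivity) (by positivity),
      Real.log_mul (ne_of_gt hn0) (Real.exp_ne_zero _), Real.log_exp,
      Real.log_rpow (by norm_num : (0:ℝ) < 2),
      Real.log_rpow (by norm_num : (0:ℝ) < 1.1)] at h'
  rw [Real.log_div (ne_of_gt hn0) (ne_of_gt ht0)]
  have hzt : (0:ℝ) ≤ (z:ℝ)/t := div_nonneg hz0 ht0.le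
  have key : (z:ℝ)/t * (1/20) ≤ Real.log n - Real.log t := by
    have h2 : (z:ℝ)/(2*t) = (z:ℝ)/t * (1/2) := by
      field_simp
    rw [h2] at h'
    nlinarith [mul_nonneg hzt (by linarith : (0:ℝ) ≤ Real.log 2 - 1/2 - Real.log 1.1 - 1/20)]
  calc (z:ℝ) = ((z:ℝ)/t * (1/20)) * (20 * t) := by
        field_simp
    _ ≤ (Real.log n - Real.log t) * (20 * t) := by
        apply mul_le_mul_of_nonneg_right key; positivity
    _ = 20 * t * (Real.log n - Real.log t) := by ring
end

section
/- Let S be a finite set of planes in ℝ³ (each given as a function z = a·x + b·y + c), and let a point p have level equal to the number of planes strictly below p. Suppose a finite collection of regions covers all points of level at most εn (where n = |S|), each region Δ meets (has a plane of S intersecting it) at most (ε/2)·n planes, and for each region at least one plane of S lying entirely below Δ is added to a set T (when such a plane exists). Then every point p of level exactly ⌈εn⌉ has some plane of T below it. -/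
/-- A plane `z = a·x + b·y + c`, encoded as the triple `(a, b, c)`,
is (strictly) below the point `p = (x, y, z)`. -/
def planeBelowPoint (h p : ℝ × ℝ × ℝ) : Prop :=
  h.1 * p.1 + h.2.1 * p.2.1 + h.2.2 < p.2.2

/-- The plane `h` is entirely below the region `Δ`. -/
def planeBelowRegion (h : ℝ × ℝ × ℝ) (Δ : Set (ℝ × ℝ × ℝ)) : Prop :=
  ∀ p ∈ Δ, planeBelowPoint h p

/-- The plane `h` meets (intersects) the region `Δ`: it is below some point of `Δ`
and not below some other point of `Δ`. -/
def planeMeetsRegion (h : ℝ × ℝ × ℝ) (Δ : Set (ℝ × ℝ × ℝ)) : Prop :=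
  (∃ p ∈ Δ, planeBelowPoint h p) ∧ (∃ q ∈ Δ, ¬ planeBelowPoint h q)

open Classical in
/-- Shallow cuttings yield `ε`-nets (Matoušek's argument): if a finite collection of
regions covers all points of level at most `εn`, each region meets at most `(ε/2)·n`
planes of `S`, and for each region a plane of `S` entirely below it (if one exists) is
added to `T`, then every point of level exactly `⌈εn⌉` has some plane of `T` below it. -/
theorem stmt11 (S : Finset (ℝ × ℝ × ℝ)) (n : ℕ) (hn : n = S.card)
    (ε : ℝ) (hε : 0 < ε) (hn0 : 0 < n)
    (cells : Finset (Set (ℝ × ℝ × ℝ))) (T : Finset (ℝ × ℝ × ℝ))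
    (hcover : ∀ p : ℝ × ℝ × ℝ,
      (S.filter (fun h => planeBelowPoint h p)).card ≤ ⌈ε * (n : ℝ)⌉₊ →
      ∃ Δ ∈ cells, p ∈ Δ)
    (hmeet : ∀ Δ ∈ cells,
      ((S.filter (fun h => planeMeetsRegion h Δ)).card : ℝ) ≤ (ε / 2) * n)
    (hT : ∀ Δ ∈ cells, (∃ h ∈ S, planeBelowRegion h Δ) →
      ∃ h ∈ T, h ∈ S ∧ planeBelowRegion h Δ) :
    ∀ p : ℝ × ℝ × ℝ,
      (S.filter (fun h => planeBelowPoint h p)).card = ⌈ε * (n : ℝ)⌉₊ →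
      ∃ h ∈ T, planeBelowPoint h p := by
  intro p hp
  obtain ⟨Δ, hΔ, hpΔ⟩ := hcover p (le_of_eq hp)
  have hsub : S.filter (fun h => planeBelowPoint h p) ⊆
      S.filter (fun h => planeMeetsRegion h Δ) ∪ S.filter (fun h => planeBelowRegion h Δ) := by
    intro h hh
    simp only [Finset.mem_filter, Finset.mem_union] at hh ⊢
    by_cases hc : ∃ q ∈ Δ, ¬ planeBelowPoint h q
    · exact Or.inl ⟨hh.1, ⟨p, hpΔ, hh.2⟩, hc⟩
    · push_neg at hc
      exact Or.inr ⟨hh.1, hc⟩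
  have hmeetlt : ((S.filter (fun h => planeMeetsRegion h Δ)).card : ℝ) < ε * n := by
    have := hmeet Δ hΔ
    have h2 : (ε / 2) * n < ε * n := by
      apply mul_lt_mul_of_pos_right _ (by exact_mod_cast hn0)
      linarith
    linarith
  have hlt : (S.filter (fun h => planeMeetsRegion h Δ)).card < ⌈ε * (n : ℝ)⌉₊ := by
    have : ((S.filter (fun h => planeMeetsRegion h Δ)).card : ℝ) < ⌈ε * (n : ℝ)⌉₊ :=
      lt_of_lt_of_le hmeetlt (Nat.le_ceil _)
    exact_mod_cast this
  have hne : (S.filter (fun h => planeBelowRegion h Δ)).Nonempty := by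
    rw [Finset.nonempty_iff_ne_empty]
    intro hemp
    have hcard := Finset.card_le_card hsub
    rw [hp, hemp, Finset.union_empty] at hcard
    omega
  obtain ⟨h0, hh0⟩ := hne
  simp only [Finset.mem_filter] at hh0
  obtain ⟨h, hT', _, hbr⟩ := hT Δ hΔ ⟨h0, hh0.1, hh0.2⟩
  exact ⟨h, hT', hbr p hpΔ⟩
end
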